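/- arXiv:1504.05975 — 4 statements merged into one kernel-verified Lean document; each statement's English description precedes it below -/
import Mathlib

section
/- Let 0 < α < 1 and f_n := D_{2^{2n+1}} - D_{2^{2n}}. Then the Cesàro mean of order α at index 2^{2n} + 1 satisfies σ_{2^{2n}+1}^α f_n = w_{2^{2n}} / A_{2^{2n}+1}^α, and in particular |σ_{2^{2n}+1}^α f_n(x)| ≥ c/(2^{2n}+1)^α for all x ∈ G, for some constant c > 0 depending only on α. -/
open MeasureTheory

abbrev DyadicGroup : Type := ℕ → ZMod 2

instance : MeasurableSpace (ZMod 2) := ⊤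

noncomputable section

/-- Rademacher function. -/
def rade (k : ℕ) (x : DyadicGroup) : ℝ := (-1 : ℝ) ^ (x k).val

/-- Walsh function. -/
def walsh (n : ℕ) (x : DyadicGroup) : ℝ :=
  ∏ k ∈ Finset.range n, if n.testBit k then rade k x else 1

/-- Walsh–Dirichlet kernel. -/
def dirichletKer (n : ℕ) (x : DyadicGroup) : ℝ := ∑ k ∈ Finset.range n, walsh k x

/-- Cesàro numbers `A_n^α`. -/
def cesaroA (α : ℝ) (n : ℕ) : ℝ := (∏ i ∈ Finset.range n, (α + (i + 1))) / (n.factorial : ℝ)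

/-- Walsh–Fourier coefficient. -/
def fourierCoef (μ : Measure DyadicGroup) (f : DyadicGroup → ℝ) (k : ℕ) : ℝ :=
  ∫ x, f x * walsh k x ∂μ

/-- Walsh–Fourier partial sum. -/
def partialSum (μ : Measure DyadicGroup) (f : DyadicGroup → ℝ) (n : ℕ) (x : DyadicGroup) : ℝ :=
  ∑ k ∈ Finset.range n, fourierCoef μ f k * walsh k x

/-- `(C,α)` Cesàro mean of Walsh–Fourier series. -/
def cesaroMean (μ : Measure DyadicGroup) (α : ℝ) (n : ℕ) (f : DyadicGroup → ℝ)
    (x : DyadicGroup) : ℝ :=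
  (cesaroA α n)⁻¹ * ∑ k ∈ Finset.Icc 1 n, cesaroA (α - 1) (n - k) * partialSum μ f k x

/-- The cylinder `I_M`. -/
def IM (M : ℕ) : Set DyadicGroup := {x | ∀ i < M, x i = 0}

/-- `μ` is the Haar probability measure on the dyadic group: every cylinder of length `n`
has measure `2⁻ⁿ`. -/
def IsDyadicHaar (μ : Measure DyadicGroup) : Prop :=
  ∀ (n : ℕ) (x : DyadicGroup), μ {y | ∀ i < n, y i = x i} = (2 : ENNReal)⁻¹ ^ n

end


/-- The test function `f_n = D_{2^{2n+1}} - D_{2^{2n}}`. -/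
def fN (n : ℕ) (x : DyadicGroup) : ℝ :=
  dirichletKer (2 ^ (2 * n + 1)) x - dirichletKer (2 ^ (2 * n)) x

namespace CA

/-- cylinder indexed by first `M` coordinates -/
def cyl (M : ℕ) (v : Fin M → ZMod 2) : Set DyadicGroup := {y | ∀ i : Fin M, y i = v i}

lemma cyl_meas (M : ℕ) (v : Fin M → ZMod 2) : MeasurableSet (cyl M v) := by
  have : cyl M v = ⋂ i : Fin M, (fun y : DyadicGroup => y (i : ℕ)) ⁻¹' {v i} := by
    ext y; simp [cyl, Set.mem_iInter]
  rw [this]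
  exact MeasurableSet.iInter fun i => (measurable_pi_apply (i : ℕ)) (by exact trivial)

lemma abs_walsh (n : ℕ) (x : DyadicGroup) : |walsh n x| = 1 := by
  rw [walsh, Finset.abs_prod]
  refine Finset.prod_eq_one fun k _ => ?_
  by_cases h : n.testBit k <;> simp [h, rade, abs_pow]

lemma measurable_walsh (n : ℕ) : Measurable (walsh n) := by
  unfold walsh
  refine Finset.measurable_prod _ fun k _ => ?_
  by_cases h : n.testBit k
  · simp only [h, if_true]
    exact (measurable_from_top (f := fun b : ZMod 2 => ((-1 : ℝ)) ^ b.val)).comp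
      (measurable_pi_apply k)
  · simp only [h, if_false]; exact measurable_const

lemma walsh_eq_range (n M : ℕ) (hn : n < 2 ^ M) (x : DyadicGroup) :
    walsh n x = ∏ k ∈ Finset.range M, if n.testBit k then rade k x else 1 := by
  unfold walsh
  trans (∏ k ∈ Finset.range (max n M), if n.testBit k then rade k x else 1)
  · refine Finset.prod_subset (Finset.range_subset_range.mpr (le_max_left n M)) fun k _ hk => ?_
    rw [if_neg]
    rw [Finset.mem_range, not_lt] at hk
    simp [Nat.testBit_lt_two_pow (lt_of_le_of_lt hk (Nat.lt_two_pow_self (n := k)))]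
  · refine (Finset.prod_subset (Finset.range_subset_range.mpr (le_max_right n M)) fun k _ hk => ?_).symm
    rw [if_neg]
    rw [Finset.mem_range, not_lt] at hk
    simp [Nat.testBit_lt_two_pow (lt_of_lt_of_le hn (Nat.pow_le_pow_right (by norm_num) hk))]

lemma walsh_mul (j k M : ℕ) (hj : j < 2 ^ M) (hk : k < 2 ^ M) (x : DyadicGroup) :
    walsh j x * walsh k x = walsh (j ^^^ k) x := by
  rw [walsh_eq_range j M hj x, walsh_eq_range k M hk x,
    walsh_eq_range (j ^^^ k) M (Nat.xor_lt_two_pow hj hk) x, ← Finset.prod_mul_distrib]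
  refine Finset.prod_congr rfl fun i _ => ?_
  have hrade : rade i x * rade i x = 1 := by
    rw [rade, ← pow_add, ← two_mul, pow_mul]; norm_num
  rcases hbj : j.testBit i <;> rcases hbk : k.testBit i <;>
    simp [Nat.testBit_xor, hbj, hbk, hrade]

variable {μ : Measure DyadicGroup}

lemma cyl_measure (hμ : IsDyadicHaar μ) (M : ℕ) (v : Fin M → ZMod 2) :
    μ (cyl M v) = (2 : ENNReal)⁻¹ ^ M := by
  have h := hμ M (fun i => if h : i < M then v ⟨i, h⟩ else 0)
  have hs : {y : DyadicGroup | ∀ i < M, y i = (fun i => if h : i < M then v ⟨i, h⟩ else 0) i}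
      = cyl M v := by
    ext y
    constructor
    · intro hy i
      have := hy i i.2
      simpa [i.2] using this
    · intro hy i hi
      simpa [hi] using hy ⟨i, hi⟩
  rwa [hs] at h

lemma isProb (hμ : IsDyadicHaar μ) : IsProbabilityMeasure μ := by
  constructor
  have h := hμ 0 0
  simpa using h

lemma integral_dep (hμ : IsDyadicHaar μ) (M : ℕ) (g : (Fin M → ZMod 2) → ℝ) :
    ∫ x, g (fun i => x i) ∂μ = ((2 : ℝ)⁻¹) ^ M * ∑ v : Fin M → ZMod 2, g v := by
  have := isProb hμ
  have hfun : (fun x : DyadicGroup => g (fun i => x i))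
      = fun x => ∑ v : Fin M → ZMod 2, (cyl M v).indicator (fun _ => g v) x := by
    funext x
    rw [Finset.sum_eq_single (fun i : Fin M => x i)]
    · simp [Set.indicator, cyl]
    · intro v _ hv
      rw [Set.indicator_of_notMem]
      intro hx
      exact hv (funext fun i => (hx i).symm)
    · simp
  rw [hfun, integral_finset_sum]
  · rw [Finset.mul_sum]
    refine Finset.sum_congr rfl fun v _ => ?_
    rw [integral_indicator_const _ (cyl_meas M v), measureReal_def, cyl_measure hμ, smul_eq_mul]
    congr 1
    simp [ENNReal.toReal_pow]
  · intro v _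
    exact (integrable_const (g v)).indicator (cyl_meas M v)

lemma sum_neg_one_pow : ∑ b : ZMod 2, ((-1:ℝ)) ^ b.val = 0 := by
  show ∑ b : Fin 2, ((-1:ℝ)) ^ b.val = 0
  simp [Fin.sum_univ_two]

lemma integral_walsh (hμ : IsDyadicHaar μ) (n M : ℕ) (hn : n < 2 ^ M) :
    ∫ x, walsh n x ∂μ = if n = 0 then 1 else 0 := by
  have key : ∀ x : DyadicGroup, walsh n x =
      (fun v : Fin M → ZMod 2 => ∏ i : Fin M, if n.testBit i then ((-1:ℝ)) ^ (v i).val else 1)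
        (fun i => x i) := by
    intro x
    rw [walsh_eq_range n M hn x, ← Fin.prod_univ_eq_prod_range
      (fun k => if n.testBit k then rade k x else 1) M]
    exact Finset.prod_congr rfl fun i _ => by by_cases h : n.testBit i <;> simp [h, rade]
  have step : ∫ x, walsh n x ∂μ = ∫ x, (fun v : Fin M → ZMod 2 =>
      ∏ i : Fin M, if n.testBit i then ((-1:ℝ)) ^ (v i).val else 1) (fun i => x i) ∂μ := by
    congr 1
    exact funext key
  rw [step, integral_dep hμ M (fun v : Fin M → ZMod 2 =>
      ∏ i : Fin M, if n.testBit i then ((-1:ℝ)) ^ (v i).val else 1)]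
  have hsum : ∑ v : Fin M → ZMod 2, ∏ i : Fin M,
      (if n.testBit i then ((-1:ℝ)) ^ (v i).val else 1)
      = ∏ i : Fin M, ∑ b : ZMod 2, (if n.testBit i then ((-1:ℝ)) ^ b.val else 1) := by
    rw [Finset.prod_univ_sum (fun _ : Fin M => (Finset.univ : Finset (ZMod 2)))
      (fun (i : Fin M) (b : ZMod 2) => if n.testBit i.val then ((-1:ℝ)) ^ b.val else 1),
      Fintype.piFinset_univ]
  rw [hsum]
  by_cases h0 : n = 0
  · subst h0
    simp [Finset.card_univ]
  · rw [if_neg h0]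
    have : ∃ i : Fin M, n.testBit i = true := by
      by_contra hc
      push_neg at hc
      apply h0
      refine Nat.eq_of_testBit_eq fun i => ?_
      rw [Nat.zero_testBit]
      rcases lt_or_ge i M with hi | hi
      · simpa using hc ⟨i, hi⟩
      · exact Nat.testBit_lt_two_pow (lt_of_lt_of_le hn (Nat.pow_le_pow_right (by norm_num) hi))
    obtain ⟨i, hi⟩ := this
    rw [Finset.prod_eq_zero (Finset.mem_univ i)]
    · ring
    · simp only [hi, if_true]
      exact sum_neg_one_pow

lemma integrable_walsh (hμ : IsDyadicHaar μ) (m : ℕ) : Integrable (walsh m) μ := by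
  have := isProb hμ
  exact (integrable_const (1:ℝ)).mono' (measurable_walsh m).aestronglyMeasurable
    (Filter.Eventually.of_forall fun x => by rw [Real.norm_eq_abs, abs_walsh])

lemma walsh_orth (hμ : IsDyadicHaar μ) (j k M : ℕ) (hj : j < 2 ^ M) (hk : k < 2 ^ M) :
    ∫ x, walsh j x * walsh k x ∂μ = if j = k then 1 else 0 := by
  have : (fun x => walsh j x * walsh k x) = walsh (j ^^^ k) :=
    funext fun x => walsh_mul j k M hj hk x
  rw [show (∫ x, walsh j x * walsh k x ∂μ) = ∫ x, walsh (j ^^^ k) x ∂μ by rw [this],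
    integral_walsh hμ _ M (Nat.xor_lt_two_pow hj hk)]
  simp [xor_eq_zero_iff]

lemma fN_eq (n : ℕ) (x : DyadicGroup) :
    fN n x = ∑ j ∈ Finset.Ico (2 ^ (2 * n)) (2 ^ (2 * n + 1)), walsh j x := by
  unfold fN dirichletKer
  rw [Finset.sum_Ico_eq_sub _ (Nat.pow_le_pow_right (by norm_num) (by omega))]

lemma fourierCoef_fN (hμ : IsDyadicHaar μ) (n k : ℕ) (hk : k < 2 ^ (2 * n + 1)) :
    fourierCoef μ (fN n) k =
      if k ∈ Finset.Ico (2 ^ (2 * n)) (2 ^ (2 * n + 1)) then 1 else 0 := by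
  unfold fourierCoef
  have step : ∫ x, fN n x * walsh k x ∂μ =
      ∫ x, ∑ j ∈ Finset.Ico (2 ^ (2 * n)) (2 ^ (2 * n + 1)), walsh j x * walsh k x ∂μ := by
    congr 1
    funext x
    rw [fN_eq, Finset.sum_mul]
  rw [step, integral_finset_sum]
  · rw [Finset.sum_congr rfl fun j hj => walsh_orth hμ j k (2 * n + 1)
      (Finset.mem_Ico.mp hj).2 hk]
    exact Finset.sum_ite_eq' _ k (fun _ => (1:ℝ))
  · intro j hj
    have : (fun x => walsh j x * walsh k x) = walsh (j ^^^ k) :=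
      funext fun x => walsh_mul j k (2 * n + 1) (Finset.mem_Ico.mp hj).2 hk x
    rw [this]
    exact integrable_walsh hμ _

lemma partialSum_fN (hμ : IsDyadicHaar μ) (n k : ℕ) (hk : k ≤ 2 ^ (2 * n) + 1)
    (x : DyadicGroup) :
    partialSum μ (fN n) k x = if k = 2 ^ (2 * n) + 1 then walsh (2 ^ (2 * n)) x else 0 := by
  unfold partialSum
  have hlt : 2 ^ (2 * n) < 2 ^ (2 * n + 1) := Nat.pow_lt_pow_right (by norm_num) (by omega)
  have hterm : ∀ j ∈ Finset.range k, fourierCoef μ (fN n) j * walsh j x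
      = if j = 2 ^ (2 * n) then walsh (2 ^ (2 * n)) x else 0 := by
    intro j hj
    have hj1 : j < 2 ^ (2 * n) + 1 := lt_of_lt_of_le (Finset.mem_range.mp hj) hk
    rw [fourierCoef_fN hμ n j (by omega)]
    by_cases h : j = 2 ^ (2 * n)
    · subst h
      rw [if_pos (Finset.mem_Ico.mpr ⟨le_refl _, hlt⟩), if_pos rfl, one_mul]
    · rw [if_neg (fun hmem => h (by have := Finset.mem_Ico.mp hmem; omega)), if_neg h, zero_mul]
  rw [Finset.sum_congr rfl hterm,
    Finset.sum_ite_eq' (Finset.range k) (2 ^ (2 * n)) (fun _ => walsh (2 ^ (2 * n)) x)]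
  have hiff : (2 ^ (2 * n) ∈ Finset.range k) ↔ k = 2 ^ (2 * n) + 1 := by
    rw [Finset.mem_range]; omega
  by_cases hk2 : k = 2 ^ (2 * n) + 1
  · rw [if_pos (hiff.mpr hk2), if_pos hk2]
  · rw [if_neg (fun h => hk2 (hiff.mp h)), if_neg hk2]

lemma cesaroA_zero (α : ℝ) : cesaroA α 0 = 1 := by simp [cesaroA]

lemma cesaroMean_eq (hμ : IsDyadicHaar μ) (α : ℝ) (n : ℕ) (x : DyadicGroup) :
    cesaroMean μ α (2 ^ (2 * n) + 1) (fN n) x =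
      walsh (2 ^ (2 * n)) x / cesaroA α (2 ^ (2 * n) + 1) := by
  unfold cesaroMean
  have hterm : ∀ k ∈ Finset.Icc 1 (2 ^ (2 * n) + 1),
      cesaroA (α - 1) (2 ^ (2 * n) + 1 - k) * partialSum μ (fN n) k x
      = if k = 2 ^ (2 * n) + 1 then walsh (2 ^ (2 * n)) x else 0 := by
    intro k hk
    obtain ⟨hk1, hk2⟩ := Finset.mem_Icc.mp hk
    rw [partialSum_fN hμ n k hk2 x]
    by_cases h : k = 2 ^ (2 * n) + 1
    · subst h
      rw [if_pos rfl, Nat.sub_self, cesaroA_zero, one_mul]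
    · rw [if_neg h, mul_zero]
  rw [Finset.sum_congr rfl hterm,
    Finset.sum_ite_eq' (Finset.Icc 1 (2 ^ (2 * n) + 1)) (2 ^ (2 * n) + 1)
      (fun _ => walsh (2 ^ (2 * n)) x),
    if_pos (Finset.mem_Icc.mpr ⟨Nat.succ_le_succ (Nat.zero_le _), le_refl _⟩), div_eq_inv_mul]

lemma cesaroA_pos {α : ℝ} (hα0 : 0 < α) (n : ℕ) : 0 < cesaroA α n := by
  refine div_pos (Finset.prod_pos fun i _ => by positivity) ?_
  exact_mod_cast Nat.factorial_pos n

lemma cesaroA_le {α : ℝ} (hα0 : 0 < α) (hα1 : α < 1) (n : ℕ) (hn : 1 ≤ n) :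
    cesaroA α n ≤ Real.exp 1 * (n : ℝ) ^ α := by
  have hfact : ((n.factorial : ℕ) : ℝ) = ∏ i ∈ Finset.range n, ((i : ℝ) + 1) := by
    rw [← Finset.prod_range_add_one_eq_factorial n, Nat.cast_prod]
    push_cast
    rfl
  have step1 : cesaroA α n = ∏ i ∈ Finset.range n, (1 + α / ((i : ℝ) + 1)) := by
    rw [cesaroA, hfact, ← Finset.prod_div_distrib]
    refine Finset.prod_congr rfl fun i _ => ?_
    have h : ((i : ℝ) + 1) ≠ 0 := by positivity
    field_simp
    ring
  have step2 : ∏ i ∈ Finset.range n, (1 + α / ((i : ℝ) + 1))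
      ≤ Real.exp (∑ i ∈ Finset.range n, α / ((i : ℝ) + 1)) := by
    rw [Real.exp_sum]
    exact Finset.prod_le_prod (fun i _ => by positivity)
      (fun i _ => by rw [add_comm]; exact Real.add_one_le_exp _)
  have hsum : ∑ i ∈ Finset.range n, α / ((i : ℝ) + 1)
      = α * (harmonic n : ℝ) := by
    rw [harmonic]
    push_cast
    rw [Finset.mul_sum]
    exact Finset.sum_congr rfl fun i _ => by rw [div_eq_mul_inv]
  have hlog : (harmonic n : ℝ) ≤ 1 + Real.log n := harmonic_le_one_add_log n
  have hlogn : 0 ≤ Real.log n := Real.log_nonneg (by exact_mod_cast hn)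
  have hharm : 0 ≤ (harmonic n : ℝ) := by
    exact_mod_cast (harmonic_pos (Nat.one_le_iff_ne_zero.mp hn)).le
  calc cesaroA α n ≤ Real.exp (α * (harmonic n : ℝ)) := by
        rw [step1]; rw [hsum] at step2; exact step2
    _ ≤ Real.exp (1 + α * Real.log n) := by
        refine Real.exp_le_exp.mpr ?_
        nlinarith
    _ = Real.exp 1 * (n : ℝ) ^ α := by
        rw [Real.exp_add, Real.rpow_def_of_pos (by positivity : (0:ℝ) < (n:ℝ)), mul_comm α]

end CA

theorem cesaroMean_fN (α : ℝ) (hα0 : 0 < α) (hα1 : α < 1)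
    (μ : Measure DyadicGroup) (hμ : IsDyadicHaar μ) :
    (∀ (n : ℕ) (x : DyadicGroup),
      cesaroMean μ α (2 ^ (2 * n) + 1) (fN n) x =
        walsh (2 ^ (2 * n)) x / cesaroA α (2 ^ (2 * n) + 1)) ∧
    ∃ c : ℝ, 0 < c ∧ ∀ (n : ℕ) (x : DyadicGroup),
      c / ((2 : ℝ) ^ (2 * n) + 1) ^ α ≤ |cesaroMean μ α (2 ^ (2 * n) + 1) (fN n) x| := by
  constructor
  · exact fun n x => CA.cesaroMean_eq hμ α n x
  · refine ⟨Real.exp (-1), Real.exp_pos _, fun n x => ?_⟩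
    rw [CA.cesaroMean_eq hμ α n x, abs_div, CA.abs_walsh,
      abs_of_pos (CA.cesaroA_pos hα0 _)]
    have hN : ((2 : ℝ) ^ (2 * n) + 1) = ((2 ^ (2 * n) + 1 : ℕ) : ℝ) := by push_cast; ring
    rw [hN]
    have hA := CA.cesaroA_le hα0 hα1 (2 ^ (2 * n) + 1) (Nat.succ_le_succ (Nat.zero_le _))
    have hApos := CA.cesaroA_pos hα0 (2 ^ (2 * n) + 1)
    have hNpos : (0 : ℝ) < ((2 ^ (2 * n) + 1 : ℕ) : ℝ) ^ α := by positivity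
    rw [div_le_div_iff₀ hNpos hApos]
    calc Real.exp (-1) * cesaroA α (2 ^ (2 * n) + 1)
        ≤ Real.exp (-1) * (Real.exp 1 * ((2 ^ (2 * n) + 1 : ℕ) : ℝ) ^ α) :=
          mul_le_mul_of_nonneg_left hA (Real.exp_pos _).le
      _ = 1 * ((2 ^ (2 * n) + 1 : ℕ) : ℝ) ^ α := by
          rw [Real.exp_neg, ← mul_assoc, inv_mul_cancel₀ (Real.exp_ne_zero 1)]
end

section
/- For 0 < p ≤ 1, the L^p quasi-norm of D_{2^{2n+1}} - D_{2^{2n}} satisfies ‖D_{2^{2n+1}} - D_{2^{2n}}‖_p ≤ c · 2^{2n(1 - 1/p)} for an absolute constant c, where ‖f‖_p = (∫_G |f|^p dμ)^{1/p}. -/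
open MeasureTheory

/-!
By Paley's lemma `D_{2^m} = 2^m · 1_{I_m}`, so `f_n = 2^{2n} (2 · 1_{I_{2n+1}} - 1_{I_{2n}})` has
modulus `2^{2n}` on `I_{2n}` and vanishes off it. As `μ(I_{2n}) = 2^{-2n}`, this gives
`∫ |f_n|^p = 2^{-2n} 2^{2np}`, and the bound holds with equality for `c = 1`.
-/

lemma prod_range_testBit_eq_of_lt_two_pow {M : Type*} [CommMonoid M] (f : ℕ → M) {n N K : ℕ}
    (hn : n < 2 ^ N) (hNK : N ≤ K) :
    ∏ j ∈ Finset.range K, (if n.testBit j then f j else 1)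
      = ∏ j ∈ Finset.range N, (if n.testBit j then f j else 1) := by
  refine (Finset.prod_subset (Finset.range_subset_range.2 hNK) fun j _ hj => ?_).symm
  have hj : N ≤ j := not_lt.1 (Finset.mem_range.not.1 hj)
  simp [Nat.testBit_lt_two_pow (hn.trans_le (Nat.pow_le_pow_right two_pos hj))]

lemma walsh_eq_prod_range {n N : ℕ} (hn : n < 2 ^ N) (x : DyadicGroup) :
    walsh n x = ∏ j ∈ Finset.range N, (if n.testBit j then rade j x else 1) := by
  rw [walsh, ← prod_range_testBit_eq_of_lt_two_pow _ n.lt_two_pow_self (le_max_left n N),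
    prod_range_testBit_eq_of_lt_two_pow _ hn (le_max_right n N)]

lemma walsh_two_pow_add {m k : ℕ} (hk : k < 2 ^ m) (x : DyadicGroup) :
    walsh (2 ^ m + k) x = rade m x * walsh k x := by
  have hlt : 2 ^ m + k < 2 ^ (m + 1) := by rw [pow_succ]; omega
  rw [walsh_eq_prod_range hlt, Finset.prod_range_succ, Nat.testBit_two_pow_add_eq,
    Nat.testBit_lt_two_pow hk, walsh_eq_prod_range hk, mul_comm]
  simp only [Bool.not_false, if_true]
  congr 1
  exact Finset.prod_congr rfl fun j hj => by
    rw [Nat.testBit_two_pow_add_gt (Finset.mem_range.1 hj)]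

lemma rade_eq_ite (k : ℕ) (x : DyadicGroup) : rade k x = if x k = 0 then 1 else -1 := by
  obtain h | h : x k = 0 ∨ x k = 1 := by generalize x k = a; decide +revert
  · simp [rade, h]
  · simp [rade, h, ZMod.val_one]

lemma dirichletKer_two_pow_succ (m : ℕ) (x : DyadicGroup) :
    dirichletKer (2 ^ (m + 1)) x = (1 + rade m x) * dirichletKer (2 ^ m) x := by
  rw [dirichletKer, pow_succ, mul_two, Finset.sum_range_add, add_mul, one_mul, dirichletKer,
    Finset.mul_sum]
  congr 1
  exact Finset.sum_congr rfl fun k hk => walsh_two_pow_add (Finset.mem_range.1 hk) x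

lemma IM_succ (m : ℕ) : IM (m + 1) = IM m ∩ {x | x m = 0} := by
  ext x
  simp only [IM, Set.mem_ofPred_eq, Set.mem_inter_iff, Nat.lt_succ_iff_lt_or_eq, or_imp,
    forall_and, forall_eq]

lemma dirichletKer_two_pow (m : ℕ) (x : DyadicGroup) :
    dirichletKer (2 ^ m) x = (IM m).indicator (fun _ => (2 : ℝ) ^ m) x := by
  induction m with
  | zero => simp [dirichletKer, walsh, IM]
  | succ m ih =>
    rw [dirichletKer_two_pow_succ, ih, rade_eq_ite, IM_succ]
    by_cases hm : x m = 0 <;> by_cases hx : x ∈ IM m <;> simp [hm, hx, pow_succ]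
    ring

lemma abs_fN (n : ℕ) (x : DyadicGroup) :
    |fN n x| = (IM (2 * n)).indicator (fun _ => (2 : ℝ) ^ (2 * n)) x := by
  rw [fN, dirichletKer_two_pow, dirichletKer_two_pow, IM_succ]
  by_cases h0 : x (2 * n) = 0 <;> by_cases hx : x ∈ IM (2 * n) <;>
    simp [h0, hx, pow_succ, mul_two]

lemma measurableSet_IM (M : ℕ) : MeasurableSet (IM M) := by
  have : IM M = ⋂ i ∈ Finset.range M, (fun y : DyadicGroup => y i) ⁻¹' {0} := by
    ext y; simp [IM]
  rw [this]
  exact .biInter (Finset.range M).countable_toSet fun i _ => measurable_pi_apply i trivial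

lemma IsDyadicHaar.measureReal_IM {μ : Measure DyadicGroup} (hμ : IsDyadicHaar μ) (M : ℕ) :
    μ.real (IM M) = (2 : ℝ)⁻¹ ^ M := by
  rw [measureReal_def, show IM M = {y | ∀ i < M, y i = (0 : DyadicGroup) i} from rfl, hμ]
  simp

lemma integral_abs_fN_rpow {μ : Measure DyadicGroup} (hμ : IsDyadicHaar μ) {p : ℝ} (hp : p ≠ 0)
    (n : ℕ) : ∫ x, |fN n x| ^ p ∂μ = (2 : ℝ)⁻¹ ^ (2 * n) * ((2 : ℝ) ^ (2 * n)) ^ p := by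
  simp_rw [abs_fN]
  rw [Set.comp_indicator_const _ (· ^ p) (Real.zero_rpow hp), integral_indicator_const _
    (measurableSet_IM _), hμ.measureReal_IM, smul_eq_mul]

lemma rpow_inv_pow_mul_pow_rpow_one_div {b : ℝ} (hb : 0 < b) (a : ℕ) {p : ℝ} (hp : p ≠ 0) :
    (b⁻¹ ^ a * (b ^ a) ^ p) ^ (1 / p) = b ^ ((a : ℝ) * (1 - 1 / p)) := by
  rw [inv_pow, ← Real.rpow_natCast, ← Real.rpow_neg hb.le, ← Real.rpow_mul hb.le,
    ← Real.rpow_add hb, ← Real.rpow_mul hb.le]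
  congr 1
  field_simp
  ring

theorem fN_Lp_norm (μ : Measure DyadicGroup) (hμ : IsDyadicHaar μ) :
    ∃ c : ℝ, 0 < c ∧ ∀ p : ℝ, 0 < p → p ≤ 1 → ∀ n : ℕ,
      (∫ x, |fN n x| ^ p ∂μ) ^ (1 / p) ≤ c * (2 : ℝ) ^ ((2 * n : ℝ) * (1 - 1 / p)) := by
  refine ⟨1, one_pos, fun p hp _ n => ?_⟩
  rw [integral_abs_fN_rpow hμ hp.ne', rpow_inv_pow_mul_pow_rpow_one_div two_pos _ hp.ne', one_mul,
    Nat.cast_mul, Nat.cast_ofNat]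
end

section
/- Let 0 < α < 1 and 0 < p < 1/(1+α). Suppose that for x in \overline{I_M} one has the two pointwise bounds: |σ_n^α a(x)| ≤ C · 2^{M(1/p-1)} 2^{αl+k} / n^α for x ∈ I_M^{k,l} with 0 ≤ k < l < M and all n > 2^M, and |σ_n^α a(x)| ≤ C · 2^{M(1/p-1)+k} for x ∈ I_M^{k,M} with 0 ≤ k < M and all n > 2^M. Then ∫_{\overline{I_M}} sup_{n > 2^M} |σ_n^α a(x) / n^{1/p-1-α}|^p dμ(x) ≤ c_{α,p} < ∞, where c_{α,p} depends only on α, p, and C (not on M or a). -/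
open MeasureTheory

/-- The set `I_M^{k,l}` for `k < l < M`. -/
def IklSet (k l : ℕ) : Set DyadicGroup :=
  {x | (∀ i < k, x i = 0) ∧ x k = 1 ∧ (∀ i, k < i → i < l → x i = 0) ∧ x l = 1}

/-- The set `I_M^{k,M}` for `k < M`. -/
def IkMSet (M k : ℕ) : Set DyadicGroup :=
  {x | (∀ i < k, x i = 0) ∧ x k = 1 ∧ ∀ i, k < i → i < M → x i = 0}

-- auxiliary material

abbrev cylSet (n : ℕ) (x : DyadicGroup) : Set DyadicGroup := {y | ∀ i < n, y i = x i}

lemma measurable_cylSet (n : ℕ) (x : DyadicGroup) : MeasurableSet (cylSet n x) := by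
  have : cylSet n x = ⋂ i ∈ Set.Iio n, {y : DyadicGroup | y i = x i} := by
    ext y; simp [cylSet]
  rw [this]
  refine MeasurableSet.biInter (Set.to_countable _) fun i _ => ?_
  have : {y : DyadicGroup | y i = x i} = (fun y : DyadicGroup => y i) ⁻¹' {x i} := rfl
  rw [this]
  exact (measurable_pi_apply i) (MeasurableSpace.measurableSet_top)

lemma IklSet_eq_cyl {k l : ℕ} (hkl : k < l) :
    IklSet k l = cylSet (l + 1) (fun i => if i = k ∨ i = l then 1 else 0) := by
  ext y
  simp only [IklSet, cylSet, Set.mem_setOf_eq]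
  constructor
  · rintro ⟨h1, h2, h3, h4⟩ i hi
    by_cases hik : i = k
    · subst hik; simp [h2]
    by_cases hil : i = l
    · subst hil; simp [h4]
    · have : i < k ∨ (k < i ∧ i < l) := by omega
      rcases this with h | h
      · simp [hik, hil, h1 i h]
      · simp [hik, hil, h3 i h.1 h.2]
  · intro h
    refine ⟨fun i hi => ?_, ?_, fun i hi1 hi2 => ?_, ?_⟩
    · simpa [show ¬(i = k ∨ i = l) by omega] using h i (by omega)
    · simpa using h k (by omega)
    · simpa [show ¬(i = k ∨ i = l) by omega] using h i (by omega)
    · simpa using h l (by omega)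

lemma IkMSet_eq_cyl {M k : ℕ} (hk : k < M) :
    IkMSet M k = cylSet M (fun i => if i = k then 1 else 0) := by
  ext y
  simp only [IkMSet, cylSet, Set.mem_setOf_eq]
  constructor
  · rintro ⟨h1, h2, h3⟩ i hi
    by_cases hik : i = k
    · subst hik; simp [h2]
    · have : i < k ∨ (k < i ∧ i < M) := by omega
      rcases this with h | h
      · simp [hik, h1 i h]
      · simp [hik, h3 i h.1 h.2]
  · intro h
    exact ⟨fun i hi => by simpa [show i ≠ k by omega] using h i (by omega),
      by simpa using h k hk,
      fun i hi1 hi2 => by simpa [show i ≠ k by omega] using h i hi2⟩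

lemma zmod2_cases (a : ZMod 2) : a = 0 ∨ a = 1 := by revert a; decide

lemma mem_piece {M : ℕ} {x : DyadicGroup} (hx : x ∉ IM M) :
    ∃ k l : ℕ, k < l ∧ l ≤ M ∧ ((l < M ∧ x ∈ IklSet k l) ∨ (l = M ∧ x ∈ IkMSet M k)) := by
  classical
  have hex : ∃ i, i < M ∧ x i = 1 := by
    simp only [IM, Set.mem_setOf_eq, not_forall] at hx
    obtain ⟨i, hi, hne⟩ := hx
    exact ⟨i, hi, (zmod2_cases (x i)).resolve_left hne⟩
  have hk : Nat.find hex < M ∧ x (Nat.find hex) = 1 := Nat.find_spec hex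
  set k := Nat.find hex with hkdef
  have hzero : ∀ i < k, x i = 0 := fun i hi => by
    rcases zmod2_cases (x i) with h | h
    · exact h
    · exact absurd ⟨by omega, h⟩ (Nat.find_min hex hi)
  by_cases h2 : ∃ j, (k < j ∧ j < M) ∧ x j = 1
  · have hl : (k < Nat.find h2 ∧ Nat.find h2 < M) ∧ x (Nat.find h2) = 1 := Nat.find_spec h2
    set l := Nat.find h2 with hldef
    refine ⟨k, l, hl.1.1, le_of_lt hl.1.2, Or.inl ⟨hl.1.2, hzero, hk.2, fun i hi1 hi2 => ?_, hl.2⟩⟩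
    rcases zmod2_cases (x i) with h | h
    · exact h
    · exact absurd ⟨⟨hi1, by omega⟩, h⟩ (Nat.find_min h2 hi2)
  · push_neg at h2
    refine ⟨k, M, hk.1, le_refl M, Or.inr ⟨rfl, hzero, hk.2, fun i hi1 hi2 => ?_⟩⟩
    rcases zmod2_cases (x i) with h | h
    · exact h
    · exact absurd h (h2 i ⟨hi1, hi2⟩)

/-- the constant on each piece -/
noncomputable def cstW (α p C : ℝ) (k l : ℕ) : ℝ := (|C| * (2:ℝ) ^ (α * l + k)) ^ p

def pieceSet (M k l : ℕ) : Set DyadicGroup := if l = M then IkMSet M k else IklSet k l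

noncomputable def gW (α p C : ℝ) (M : ℕ) (x : DyadicGroup) : ℝ :=
  ∑ l ∈ Finset.Icc 1 M, ∑ k ∈ Finset.range l,
    (pieceSet M k l).indicator (fun _ => cstW α p C k l) x

lemma pieceSet_measurable {M k l : ℕ} (hkl : k < l) (hlM : l ≤ M) :
    MeasurableSet (pieceSet M k l) := by
  unfold pieceSet
  split
  · next h => rw [IkMSet_eq_cyl (show k < M by omega)]; exact measurable_cylSet _ _
  · next h => rw [IklSet_eq_cyl hkl]; exact measurable_cylSet _ _

lemma pieceSet_measure_le {μ : Measure DyadicGroup} (hμ : IsDyadicHaar μ) {M k l : ℕ}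
    (hkl : k < l) (hlM : l ≤ M) : (μ (pieceSet M k l)).toReal ≤ (2:ℝ)⁻¹ ^ l := by
  unfold pieceSet
  split
  · next h =>
    subst h
    rw [IkMSet_eq_cyl (show k < l by omega), hμ]
    simp [ENNReal.toReal_pow]
  · next h =>
    rw [IklSet_eq_cyl hkl, hμ]
    have h1 : ((2:ENNReal)⁻¹ ^ (l+1)).toReal = (2:ℝ)⁻¹ ^ (l+1) := by
      simp [ENNReal.toReal_pow]
    rw [h1]
    exact pow_le_pow_of_le_one (by norm_num) (by norm_num) (by omega)

theorem weighted_maximal_integral_bound (α p : ℝ) (hα0 : 0 < α) (hα1 : α < 1)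
    (hp0 : 0 < p) (hp1 : p < 1 / (1 + α))
    (μ : Measure DyadicGroup) (hμ : IsDyadicHaar μ) (C : ℝ) :
    ∃ c : ℝ, ∀ (M : ℕ) (a : DyadicGroup → ℝ),
      (∀ k l : ℕ, k < l → l < M → ∀ x ∈ IklSet k l, ∀ n : ℕ, 2 ^ M < n →
        |cesaroMean μ α n a x| ≤
          C * (2 : ℝ) ^ ((M : ℝ) * (1 / p - 1)) * (2 : ℝ) ^ (α * l + k) / (n : ℝ) ^ α) →
      (∀ k : ℕ, k < M → ∀ x ∈ IkMSet M k, ∀ n : ℕ, 2 ^ M < n →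
        |cesaroMean μ α n a x| ≤ C * (2 : ℝ) ^ ((M : ℝ) * (1 / p - 1) + k)) →
      ∫ x in (IM M)ᶜ,
          (⨆ (n : ℕ) (_ : 2 ^ M < n),
            |cesaroMean μ α n a x| / (n : ℝ) ^ (1 / p - 1 - α)) ^ p ∂μ ≤ c := by
  classical
  have h1α : (0:ℝ) < 1 + α := by linarith
  have hpa : p * (1 + α) < 1 := (lt_div_iff₀ h1α).mp hp1
  have h1p : 1 + α < 1 / p := (lt_div_iff₀ hp0).2 (by nlinarith)
  have hβ0 : 0 < 1 / p - 1 - α := by linarith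
  have hγ0 : 0 < 1 / p - 1 := by linarith
  set q : ℝ := (2:ℝ) ^ p with hqdef
  set A : ℝ := (2:ℝ) ^ (p * α) with hAdef
  set ρ : ℝ := (2:ℝ)⁻¹ * A * q with hρdef
  have hq1 : 1 < q := by
    rw [hqdef]
    exact (Real.one_lt_rpow_iff_of_pos (by norm_num)).2 (Or.inl ⟨by norm_num, hp0⟩)
  have hq0 : 0 < q := lt_trans one_pos hq1
  have hA0 : 0 < A := Real.rpow_pos_of_pos (by norm_num) _
  have hρ0 : 0 ≤ ρ := by rw [hρdef]; positivity
  have hρ1 : ρ < 1 := by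
    have hρeq : ρ = (2:ℝ) ^ (p * α + p - 1) := by
      rw [hρdef, hAdef, hqdef, show (2:ℝ)⁻¹ = (2:ℝ) ^ (-1:ℝ) by rw [Real.rpow_neg_one],
        ← Real.rpow_add (by norm_num : (0:ℝ) < 2), ← Real.rpow_add (by norm_num : (0:ℝ) < 2)]
      ring_nf
    rw [hρeq]
    exact Real.rpow_lt_one_of_one_lt_of_neg (by norm_num) (by nlinarith)
  refine ⟨|C| ^ p * ((q - 1)⁻¹ * (1 - ρ)⁻¹), fun M a h1 h2 => ?_⟩
  have huniv : μ Set.univ = 1 := by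
    have h0 := hμ 0 (fun _ => 0)
    simpa using h0
  haveI : IsFiniteMeasure μ := ⟨by rw [huniv]; exact ENNReal.one_lt_top⟩
  have hcst0 : ∀ k l : ℕ, 0 ≤ cstW α p C k l := fun k l =>
    Real.rpow_nonneg (mul_nonneg (abs_nonneg C) (Real.rpow_nonneg (by norm_num) _)) _
  have hg0 : ∀ x, 0 ≤ gW α p C M x := fun x =>
    Finset.sum_nonneg fun l _ => Finset.sum_nonneg fun k _ =>
      Set.indicator_nonneg (fun _ _ => hcst0 k l) x
  have hgint : Integrable (gW α p C M) μ := by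
    apply integrable_finset_sum
    intro l hl
    apply integrable_finset_sum
    intro k hk
    simp only [Finset.mem_Icc] at hl
    exact (integrable_const _).indicator
      (pieceSet_measurable (Finset.mem_range.mp hk) hl.2)
  have hmeasIMc : MeasurableSet (IM M)ᶜ := by
    have hIM : IM M = cylSet M (fun _ => 0) := rfl
    rw [hIM]
    exact (measurable_cylSet _ _).compl
  have hfg : ∀ x ∈ (IM M)ᶜ,
      (⨆ (n : ℕ) (_ : 2 ^ M < n),
        |cesaroMean μ α n a x| / (n:ℝ) ^ (1 / p - 1 - α)) ^ p ≤ gW α p C M x := by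
    intro x hx
    obtain ⟨k, l, hkl, hlM, hcase⟩ := mem_piece hx
    have hb0 : 0 ≤ |C| * (2:ℝ) ^ (α * l + k) :=
      mul_nonneg (abs_nonneg C) (Real.rpow_nonneg (by norm_num) _)
    have hsup : (⨆ (n : ℕ) (_ : 2 ^ M < n),
        |cesaroMean μ α n a x| / (n:ℝ) ^ (1 / p - 1 - α)) ≤ |C| * (2:ℝ) ^ (α * l + k) := by
      refine Real.iSup_le (fun n => ?_) hb0
      by_cases hn : 2 ^ M < n
      · haveI : Nonempty (2 ^ M < n) := ⟨hn⟩
        rw [ciSup_const]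
        have hnR : ((2:ℝ) ^ M) < (n:ℝ) := by exact_mod_cast hn
        have hn0 : (0:ℝ) < (n:ℝ) := lt_trans (by positivity) hnR
        have key : ∀ t : ℝ, 0 ≤ t → (2:ℝ) ^ ((M:ℝ) * t) ≤ (n:ℝ) ^ t := by
          intro t ht
          have h2M : (2:ℝ) ^ ((M:ℝ) * t) = ((2:ℝ) ^ M) ^ t := by
            rw [← Real.rpow_natCast 2 M, ← Real.rpow_mul (by norm_num)]
          rw [h2M]
          exact Real.rpow_le_rpow (by positivity) hnR.le ht
        rcases hcase with ⟨hlt, hmem⟩ | ⟨rfl, hmem⟩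
        · have hmain := h1 k l hkl hlt x hmem n hn
          calc |cesaroMean μ α n a x| / (n:ℝ) ^ (1 / p - 1 - α)
              ≤ (C * (2:ℝ) ^ ((M:ℝ) * (1/p - 1)) * (2:ℝ) ^ (α * l + k) / (n:ℝ) ^ α)
                  / (n:ℝ) ^ (1 / p - 1 - α) := by gcongr
            _ = C * (2:ℝ) ^ ((M:ℝ) * (1/p - 1)) * (2:ℝ) ^ (α * l + k)
                  / (n:ℝ) ^ (1/p - 1) := by
                rw [div_div, ← Real.rpow_add hn0]
                norm_num
            _ ≤ |C| * (2:ℝ) ^ ((M:ℝ) * (1/p - 1)) * (2:ℝ) ^ (α * l + k)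
                  / (n:ℝ) ^ (1/p - 1) := by
                gcongr (?_ * _ * _) / _
                exact le_abs_self C
            _ = (|C| * (2:ℝ) ^ (α * l + k))
                  * ((2:ℝ) ^ ((M:ℝ) * (1/p - 1)) / (n:ℝ) ^ (1/p - 1)) := by ring
            _ ≤ (|C| * (2:ℝ) ^ (α * l + k)) * 1 := by
                gcongr
                exact (div_le_one (Real.rpow_pos_of_pos hn0 _)).2 (key _ (by linarith))
            _ = |C| * (2:ℝ) ^ (α * l + k) := mul_one _
        · have hmain := h2 k hkl x hmem n hn
          calc |cesaroMean μ α n a x| / (n:ℝ) ^ (1 / p - 1 - α)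
              ≤ (C * (2:ℝ) ^ ((l:ℝ) * (1/p - 1) + k)) / (n:ℝ) ^ (1 / p - 1 - α) := by
                exact div_le_div_of_nonneg_right hmain
                  (Real.rpow_pos_of_pos hn0 _).le
            _ ≤ (|C| * (2:ℝ) ^ ((l:ℝ) * (1/p - 1) + k)) / (n:ℝ) ^ (1 / p - 1 - α) :=
                div_le_div_of_nonneg_right
                  (mul_le_mul_of_nonneg_right (le_abs_self C)
                    (Real.rpow_nonneg (by norm_num) _))
                  (Real.rpow_pos_of_pos hn0 _).le
            _ ≤ (|C| * (2:ℝ) ^ ((l:ℝ) * (1/p - 1) + k))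
                  / (2:ℝ) ^ ((l:ℝ) * (1/p - 1 - α)) :=
                div_le_div_of_nonneg_left
                  (mul_nonneg (abs_nonneg C) (Real.rpow_nonneg (by norm_num) _))
                  (Real.rpow_pos_of_pos (by norm_num) _)
                  (key _ hβ0.le)
            _ = |C| * (2:ℝ) ^ (α * (l:ℝ) + (k:ℝ)) := by
                rw [show α * (l:ℝ) + (k:ℝ)
                      = ((l:ℝ) * (1/p - 1) + k) - (l:ℝ) * (1/p - 1 - α) by ring,
                  Real.rpow_sub (by norm_num), mul_div_assoc]
      · haveI : IsEmpty (2 ^ M < n) := ⟨hn⟩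
        rw [Real.iSup_of_isEmpty]
        exact hb0
    have hsup0 : 0 ≤ ⨆ (n : ℕ) (_ : 2 ^ M < n),
        |cesaroMean μ α n a x| / (n:ℝ) ^ (1 / p - 1 - α) :=
      Real.iSup_nonneg fun n => Real.iSup_nonneg fun _ => by positivity
    refine le_trans (Real.rpow_le_rpow hsup0 hsup hp0.le) ?_
    have hxmem : x ∈ pieceSet M k l := by
      rcases hcase with ⟨hlt, hmem⟩ | ⟨rfl, hmem⟩
      · simpa [pieceSet, Nat.ne_of_lt hlt] using hmem
      · simpa [pieceSet] using hmem
    have hl1 : l ∈ Finset.Icc 1 M := by simp; omega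
    calc (|C| * (2:ℝ) ^ (α * l + k)) ^ p
        = (pieceSet M k l).indicator (fun _ => cstW α p C k l) x := by
          rw [Set.indicator_of_mem hxmem]; rfl
      _ ≤ ∑ k' ∈ Finset.range l, (pieceSet M k' l).indicator (fun _ => cstW α p C k' l) x :=
          Finset.single_le_sum
            (f := fun k' => (pieceSet M k' l).indicator (fun _ => cstW α p C k' l) x)
            (fun i _ => Set.indicator_nonneg (fun _ _ => hcst0 i l) x)
            (Finset.mem_range.2 hkl)
      _ ≤ gW α p C M x :=
          Finset.single_le_sum
            (f := fun j => ∑ i ∈ Finset.range j,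
              (pieceSet M i j).indicator (fun _ => cstW α p C i j) x)
            (fun j _ => Finset.sum_nonneg fun i _ =>
              Set.indicator_nonneg (fun _ _ => hcst0 i j) x) hl1
  calc ∫ x in (IM M)ᶜ, (⨆ (n : ℕ) (_ : 2 ^ M < n),
          |cesaroMean μ α n a x| / (n:ℝ) ^ (1 / p - 1 - α)) ^ p ∂μ
      ≤ ∫ x in (IM M)ᶜ, gW α p C M x ∂μ := by
        refine integral_mono_of_nonneg (ae_of_all _ fun x => ?_) hgint.restrict
          ((ae_restrict_iff' hmeasIMc).2 (ae_of_all _ hfg))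
        exact Real.rpow_nonneg (Real.iSup_nonneg fun n =>
          Real.iSup_nonneg fun _ => by positivity) p
    _ ≤ ∫ x, gW α p C M x ∂μ := setIntegral_le_integral hgint (ae_of_all _ hg0)
    _ = ∑ l ∈ Finset.Icc 1 M, ∑ k ∈ Finset.range l,
          (μ (pieceSet M k l)).toReal * cstW α p C k l := by
        unfold gW
        rw [integral_finset_sum]
        · refine Finset.sum_congr rfl fun l hl => ?_
          simp only [Finset.mem_Icc] at hl
          rw [integral_finset_sum]
          · refine Finset.sum_congr rfl fun k hk => ?_
            rw [integral_indicator_const _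
              (pieceSet_measurable (Finset.mem_range.mp hk) hl.2)]
            simp [mul_comm]
            exact Or.inl rfl
          · exact fun k hk => (integrable_const _).indicator
              (pieceSet_measurable (Finset.mem_range.mp hk) hl.2)
        · intro l hl
          simp only [Finset.mem_Icc] at hl
          exact integrable_finset_sum _ fun k hk => (integrable_const _).indicator
            (pieceSet_measurable (Finset.mem_range.mp hk) hl.2)
    _ ≤ ∑ l ∈ Finset.Icc 1 M, |C| ^ p * (q - 1)⁻¹ * ρ ^ l := by
        refine Finset.sum_le_sum fun l hl => ?_
        simp only [Finset.mem_Icc] at hl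
        have hcst_eq : ∀ k : ℕ, cstW α p C k l = |C| ^ p * (A ^ l * q ^ k) := by
          intro k
          rw [cstW, Real.mul_rpow (abs_nonneg C) (Real.rpow_nonneg (by norm_num) _)]
          congr 1
          rw [hAdef, hqdef, ← Real.rpow_natCast ((2:ℝ) ^ (p * α)) l,
            ← Real.rpow_natCast ((2:ℝ) ^ p) k,
            ← Real.rpow_mul (by norm_num : (0:ℝ) ≤ 2),
            ← Real.rpow_mul (by norm_num : (0:ℝ) ≤ 2),
            ← Real.rpow_mul (by norm_num : (0:ℝ) ≤ 2),
            ← Real.rpow_add (by norm_num : (0:ℝ) < 2)]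
          congr 1
          ring
        calc ∑ k ∈ Finset.range l, (μ (pieceSet M k l)).toReal * cstW α p C k l
            ≤ ∑ k ∈ Finset.range l, (2:ℝ)⁻¹ ^ l * (|C| ^ p * (A ^ l * q ^ k)) := by
              refine Finset.sum_le_sum fun k hk => ?_
              rw [← hcst_eq k]
              exact mul_le_mul_of_nonneg_right
                (pieceSet_measure_le hμ (Finset.mem_range.mp hk) hl.2) (hcst0 k l)
          _ = ∑ k ∈ Finset.range l, (2:ℝ)⁻¹ ^ l * (|C| ^ p * A ^ l) * q ^ k :=
              Finset.sum_congr rfl fun k _ => by ring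
          _ = (2:ℝ)⁻¹ ^ l * (|C| ^ p * A ^ l) * ∑ k ∈ Finset.range l, q ^ k := by
              rw [← Finset.mul_sum]
          _ ≤ (2:ℝ)⁻¹ ^ l * (|C| ^ p * A ^ l) * (q ^ l / (q - 1)) := by
              have hgeo : ∑ k ∈ Finset.range l, q ^ k = (q ^ l - 1) / (q - 1) :=
                geom_sum_eq (ne_of_gt hq1) l
              rw [hgeo]
              have h01 : (0:ℝ) ≤ (2:ℝ)⁻¹ ^ l * (|C| ^ p * A ^ l) := by positivity
              refine mul_le_mul_of_nonneg_left ?_ h01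
              exact div_le_div_of_nonneg_right (by linarith [pow_pos hq0 l]) (by linarith)
          _ = |C| ^ p * (q - 1)⁻¹ * ρ ^ l := by
              rw [hρdef, mul_pow, mul_pow]
              field_simp
    _ ≤ |C| ^ p * ((q - 1)⁻¹ * (1 - ρ)⁻¹) := by
        rw [← Finset.mul_sum]
        have hsub : Finset.Icc 1 M ⊆ Finset.range (M + 1) := by
          intro i hi; simp only [Finset.mem_Icc] at hi; exact Finset.mem_range.2 (by omega)
        have hle1 : ∑ l ∈ Finset.Icc 1 M, ρ ^ l ≤ ∑ l ∈ Finset.range (M+1), ρ ^ l :=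
          Finset.sum_le_sum_of_subset_of_nonneg hsub fun i _ _ => pow_nonneg hρ0 i
        have hle2 : ∑ l ∈ Finset.range (M+1), ρ ^ l ≤ (1 - ρ)⁻¹ := by
          rw [geom_sum_eq (ne_of_lt hρ1) (M+1)]
          rw [show (ρ ^ (M+1) - 1) / (ρ - 1) = (1 - ρ ^ (M+1)) / (1 - ρ) by
            rw [div_eq_div_iff (by linarith) (by linarith)]; ring]
          rw [inv_eq_one_div]
          exact div_le_div_of_nonneg_right (by linarith [pow_nonneg hρ0 (M+1)]) (by linarith)
        calc |C| ^ p * (q - 1)⁻¹ * ∑ l ∈ Finset.Icc 1 M, ρ ^ l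
            ≤ |C| ^ p * (q - 1)⁻¹ * (1 - ρ)⁻¹ :=
              mul_le_mul_of_nonneg_left (le_trans hle1 hle2)
                (mul_nonneg (Real.rpow_nonneg (abs_nonneg C) p)
                  (inv_nonneg.2 (by linarith)))
          _ = |C| ^ p * ((q - 1)⁻¹ * (1 - ρ)⁻¹) := by ring
end

section
/- Let 0 < α < 1 and 0 < p < 1/(1+α), and let M ∈ ℕ. Suppose that for all m > 2^M: ∫_{I_M} |σ_m^α a|^p dμ ≤ C, and |σ_m^α a(x)| ≤ C · 2^{M(1/p-1)} 2^{αl+k}/m^α for x ∈ I_M^{k,l} (0 ≤ k < l < M), and |σ_m^α a(x)| ≤ C · 2^{M(1/p-1)+k} for x ∈ I_M^{k,M} (0 ≤ k < M). Then ∑_{m=2^M+1}^∞ (∫_G |σ_m^α a|^p dμ) / m^{2-(1+α)p} ≤ c_{α,p} < ∞, where c_{α,p} depends only on α, p, and C. -/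
open MeasureTheory

/-!
Every point of `G` lies in `I_M` or in one of the pieces `I_M^{k,l}`, `I_M^{k,M}` (read off from
the first two nonzero coordinates below `M`). On each piece, bound `|σ_m^α a|^p` by the pointwise
hypothesis times the measure `2^{-l-1}` resp. `2^{-M}` of the piece; the sums over `k` and `l` are
geometric with ratios `2^p > 1` and `2^{(1+α)p-1} < 1` (this is where `p < 1/(1+α)` enters), so
`∫_G |σ_m^α a|^p ≤ K₁ + K₂ 2^{M(1-p)} m^{-αp}`. Dividing by `m^{2-(1+α)p}` and comparing the sum
over `m > 2^M` with `∫ x^{-s} dx`, the first term gives `K₁ / (1 - (1+α)p)`, and in the second the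
tail `∑_{m > 2^M} m^{p-2} ≤ 2^{M(p-1)} / (1-p)` cancels `2^{M(1-p)}`, so the bound does not
depend on `M`.
-/

open Finset

section SetIntegral

variable {X ι : Type*} [MeasurableSpace X] {μ : Measure X} {f : X → ℝ}

lemma setIntegral_union_le_add (hf : 0 ≤ f) (hfi : Integrable f μ) (s t : Set X) :
    ∫ x in s ∪ t, f x ∂μ ≤ ∫ x in s, f x ∂μ + ∫ x in t, f x ∂μ := by
  rw [← integral_add_measure hfi.restrict hfi.restrict]
  exact integral_mono_measure (Measure.restrict_union_le s t) (ae_of_all _ hf)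
    (hfi.restrict.add_measure hfi.restrict)

lemma setIntegral_biUnion_le_sum (hf : 0 ≤ f) (hfi : Integrable f μ) (t : Finset ι)
    (s : ι → Set X) : ∫ x in ⋃ i ∈ t, s i, f x ∂μ ≤ ∑ i ∈ t, ∫ x in s i, f x ∂μ := by
  classical
  induction t using Finset.induction_on with
  | empty => simp
  | insert i t hi ih =>
    rw [set_biUnion_insert, sum_insert hi]
    exact (setIntegral_union_le_add hf hfi _ _).trans (add_le_add_right ih _)

lemma setIntegral_abs_rpow_le [IsFiniteMeasure μ] {p B : ℝ} (hp : 0 ≤ p) {s : Set X}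
    (hB : ∀ x ∈ s, |f x| ≤ B) : ∫ x in s, |f x| ^ p ∂μ ≤ B ^ p * μ.real s := by
  refine (Real.le_norm_self _).trans
    (norm_setIntegral_le_of_norm_le_const (measure_lt_top μ s) fun x hx => ?_)
  rw [Real.norm_of_nonneg (by positivity)]
  exact Real.rpow_le_rpow (abs_nonneg _) (hB x hx) hp

end SetIntegral

lemma geom_sum_le_of_one_lt {r : ℝ} (hr : 1 < r) (n : ℕ) :
    ∑ k ∈ range n, r ^ k ≤ r ^ n / (r - 1) := by
  rw [geom_sum_eq hr.ne']
  gcongr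
  linarith

lemma sum_range_pow_mul_geom_sum_le {r s : ℝ} (hr : 1 < r) (hs : 0 ≤ s) (hsr : s * r < 1)
    (M : ℕ) : ∑ l ∈ range M, s ^ l * ∑ k ∈ range l, r ^ k ≤ 1 / ((r - 1) * (1 - s * r)) := by
  have hr1 : 0 < r - 1 := by linarith
  calc ∑ l ∈ range M, s ^ l * ∑ k ∈ range l, r ^ k
      ≤ ∑ l ∈ range M, s ^ l * (r ^ l / (r - 1)) := by
        gcongr with l
        exact geom_sum_le_of_one_lt hr l
    _ = (∑ l ∈ Ico 0 M, (s * r) ^ l) / (r - 1) := by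
        rw [← range_eq_Ico, sum_div]
        simp_rw [mul_pow, mul_div_assoc]
    _ ≤ (s * r) ^ 0 / (1 - s * r) / (r - 1) := by
        gcongr
        exact geom_sum_Ico_le_of_lt_one (by positivity) hsr
    _ = 1 / ((r - 1) * (1 - s * r)) := by
        rw [pow_zero, div_div, mul_comm]

lemma sum_rpow_neg_le_of_lt {r : ℝ} (hr : 1 < r) {N : ℕ} (hN : 0 < N) (s : Finset ℕ)
    (hs : ∀ m ∈ s, N < m) :
    ∑ m ∈ s, (m : ℝ) ^ (-r) ≤ (N : ℝ) ^ (1 - r) / (r - 1) := by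
  set K := max N (s.sup id)
  have hNK : N ≤ K := le_max_left _ _
  have hN0 : (0 : ℝ) < N := by exact_mod_cast hN
  have hanti : AntitoneOn (fun x : ℝ => x ^ (-r)) (Set.Icc N K) := fun x hx y _ hxy =>
    Real.rpow_le_rpow_of_nonpos (hN0.trans_le hx.1) hxy (by linarith)
  have hzero : (0 : ℝ) ∉ Set.uIcc (N : ℝ) K := by
    rw [Set.uIcc_of_le (by exact_mod_cast hNK)]
    exact fun h => hN0.not_ge h.1
  calc ∑ m ∈ s, (m : ℝ) ^ (-r)
      ≤ ∑ m ∈ Ioc N K, (m : ℝ) ^ (-r) :=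
        sum_le_sum_of_subset_of_nonneg
          (fun m hm => mem_Ioc.2 ⟨hs m hm, le_max_of_le_right (le_sup (f := id) hm)⟩)
          (fun m _ _ => by positivity)
    _ = ∑ i ∈ Ico N K, ((i + 1 : ℕ) : ℝ) ^ (-r) := by
        rw [← Ico_add_one_add_one_eq_Ioc, ← sum_Ico_add']
    _ ≤ ∫ x in (N : ℝ)..K, x ^ (-r) := hanti.sum_le_integral_Ico hNK
    _ = ((N : ℝ) ^ (1 - r) - (K : ℝ) ^ (1 - r)) / (r - 1) := by
        rw [integral_rpow (Or.inr ⟨by linarith, hzero⟩), show -r + 1 = 1 - r by ring,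
          ← neg_div_neg_eq, neg_sub, neg_sub', sub_neg_eq_add, neg_add_eq_sub]
    _ ≤ (N : ℝ) ^ (1 - r) / (r - 1) := by
        gcongr
        exact sub_le_self _ (by positivity)

lemma tsum_ite_lt_le_of_le_rpow {N : ℕ} (hN : 0 < N) {a b A B : ℝ} (ha : 1 < a) (hb : 1 < b)
    (hA : 0 ≤ A) (hB : 0 ≤ B) (g : ℕ → ℝ)
    (hg : ∀ m, N < m → g m ≤ A * (m : ℝ) ^ (-a) + B * (N : ℝ) ^ (b - 1) * (m : ℝ) ^ (-b)) :
    ∑' m, (if N < m then g m else 0) ≤ A / (a - 1) + B / (b - 1) := by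
  have ha1 : 0 < a - 1 := by linarith
  have hb1 : 0 < b - 1 := by linarith
  have hN0 : (0 : ℝ) < N := by exact_mod_cast hN
  refine tsum_le_of_sum_le' (by positivity) fun u => ?_
  rw [← sum_filter]
  set s := u.filter (N < ·)
  have hs : ∀ m ∈ s, N < m := fun m hm => (mem_filter.1 hm).2
  calc ∑ m ∈ s, g m
      ≤ ∑ m ∈ s, (A * (m : ℝ) ^ (-a) + B * (N : ℝ) ^ (b - 1) * (m : ℝ) ^ (-b)) :=
        sum_le_sum fun m hm => hg m (hs m hm)
    _ = A * ∑ m ∈ s, (m : ℝ) ^ (-a) + B * ((N : ℝ) ^ (b - 1) * ∑ m ∈ s, (m : ℝ) ^ (-b)) := by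
        rw [sum_add_distrib, mul_sum, mul_sum, mul_sum]
        simp_rw [mul_assoc]
    _ ≤ A * (1 / (a - 1)) + B * (1 / (b - 1)) := by
        gcongr
        · refine (sum_rpow_neg_le_of_lt ha hN s hs).trans ?_
          gcongr
          exact Real.rpow_le_one_of_one_le_of_nonpos (by exact_mod_cast hN) (by linarith)
        · refine (mul_le_mul_of_nonneg_left (sum_rpow_neg_le_of_lt hb hN s hs)
            (by positivity)).trans_eq ?_
          rw [← mul_div_assoc, ← Real.rpow_add hN0, show b - 1 + (1 - b) = 0 by ring,
            Real.rpow_zero]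
    _ = A / (a - 1) + B / (b - 1) := by
        rw [mul_one_div, mul_one_div]

lemma IsDyadicHaar.isProbabilityMeasure {μ : Measure DyadicGroup} (hμ : IsDyadicHaar μ) :
    IsProbabilityMeasure μ :=
  ⟨by simpa using hμ 0 0⟩

lemma IsDyadicHaar.measureReal_le_of_subset_cylinder {μ : Measure DyadicGroup}
    (hμ : IsDyadicHaar μ) {s : Set DyadicGroup} {n : ℕ} {z : DyadicGroup}
    (hs : s ⊆ {y | ∀ i < n, y i = z i}) : μ.real s ≤ 2⁻¹ ^ n := by
  have := hμ.isProbabilityMeasure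
  calc μ.real s ≤ μ.real {y | ∀ i < n, y i = z i} := measureReal_mono hs
    _ = 2⁻¹ ^ n := by simp [measureReal_def, hμ n z]

lemma IklSet_subset_cylinder {k l : ℕ} (hkl : k < l) :
    IklSet k l ⊆ {y | ∀ i < l + 1, y i = if i = k ∨ i = l then 1 else 0} := by
  rintro y ⟨hbelow, hk, hbetween, hl⟩ i hi
  rcases lt_trichotomy i k with h | rfl | h
  · simp [hbelow i h, h.ne, (h.trans hkl).ne]
  · simp [hk]
  · rcases Nat.lt_succ_iff_lt_or_eq.1 hi with h' | rfl
    · simp [hbetween i h h', h.ne', h'.ne]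
    · simp [hl]

lemma IkMSet_subset_cylinder (M k : ℕ) :
    IkMSet M k ⊆ {y | ∀ i < M, y i = if i = k then 1 else 0} := by
  rintro y ⟨hbelow, hk, habove⟩ i hi
  rcases lt_trichotomy i k with h | rfl | h
  · simp [hbelow i h, h.ne]
  · simp [hk]
  · simp [habove i h hi, h.ne']

lemma mem_IM_or_mem_IklSet_or_mem_IkMSet (M : ℕ) (x : DyadicGroup) :
    x ∈ IM M ∨ (∃ l < M, ∃ k < l, x ∈ IklSet k l) ∨ ∃ k < M, x ∈ IkMSet M k := by
  classical
  by_cases hx : x ∈ IM M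
  · exact Or.inl hx
  right
  have hk : ∃ k, k < M ∧ x k ≠ 0 := by simpa [IM] using hx
  obtain ⟨hkM, hxk⟩ := Nat.find_spec hk
  set k := Nat.find hk
  have hbelow : ∀ i < k, x i = 0 := fun i hi => by
    simpa [hi.trans hkM] using Nat.find_min hk hi
  by_cases hl : ∃ l, (k < l ∧ l < M) ∧ x l ≠ 0
  · obtain ⟨⟨hkl, hlM⟩, hxl⟩ := Nat.find_spec hl
    refine Or.inl ⟨Nat.find hl, hlM, k, hkl, hbelow, Fin.eq_one_of_ne_zero _ hxk,
      fun i hki hil => ?_, Fin.eq_one_of_ne_zero _ hxl⟩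
    simpa [hki, hil.trans hlM] using Nat.find_min hl hil
  · push Not at hl
    exact Or.inr ⟨k, hkM, hbelow, Fin.eq_one_of_ne_zero _ hxk, fun i hki hiM => hl i ⟨hki, hiM⟩⟩

lemma IM_union_iUnion_IklSet_union_iUnion_IkMSet (M : ℕ) :
    IM M ∪ (⋃ l ∈ range M, ⋃ k ∈ range l, IklSet k l) ∪ ⋃ k ∈ range M, IkMSet M k = Set.univ :=
  Set.eq_univ_of_forall fun x => by
    simpa [or_assoc] using mem_IM_or_mem_IklSet_or_mem_IkMSet M x

lemma measurable_rade (k : ℕ) : Measurable (rade k) :=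
  (measurable_from_top (f := fun v : ZMod 2 => (-1 : ℝ) ^ v.val)).comp (measurable_pi_apply k)

lemma measurable_walsh (n : ℕ) : Measurable (walsh n) :=
  Finset.measurable_prod _ fun k _ => by
    split_ifs
    exacts [measurable_rade k, measurable_const]

lemma abs_walsh_le_one (n : ℕ) (x : DyadicGroup) : |walsh n x| ≤ 1 := by
  rw [walsh, abs_prod]
  refine prod_le_one (fun _ _ => abs_nonneg _) fun k _ => ?_
  split_ifs <;> simp [rade]

lemma memLp_top_walsh (μ : Measure DyadicGroup) (n : ℕ) : MemLp (walsh n) ⊤ μ :=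
  memLp_top_of_bound (measurable_walsh n).aestronglyMeasurable 1
    (ae_of_all _ fun x => abs_walsh_le_one n x)

lemma memLp_top_cesaroMean (μ ν : Measure DyadicGroup) (α : ℝ) (m : ℕ) (f : DyadicGroup → ℝ) :
    MemLp (cesaroMean μ α m f) ⊤ ν :=
  (memLp_finsetSum _ fun _ _ => ((memLp_finsetSum _ fun j _ =>
    (memLp_top_walsh ν j).const_mul _).const_mul _)).const_mul _

lemma integrable_abs_cesaroMean_rpow (μ ν : Measure DyadicGroup) [IsFiniteMeasure ν] (α : ℝ)
    (m : ℕ) (f : DyadicGroup → ℝ) {p : ℝ} (hp : 0 ≤ p) :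
    Integrable (fun x => |cesaroMean μ α m f x| ^ p) ν := by
  simpa [ENNReal.toReal_ofReal hp] using
    ((memLp_top_cesaroMean μ ν α m f).mono_exponent
      (le_top (a := ENNReal.ofReal p))).integrable_norm_rpow'

lemma rpow_IkMSet_bound_mul_eq {p : ℝ} (hp : 0 < p) {C : ℝ} (hC : 0 ≤ C) (M k : ℕ) :
    (C * (2 : ℝ) ^ ((M : ℝ) * (1 / p - 1) + k)) ^ p * 2⁻¹ ^ M
      = C ^ p * ((2 : ℝ) ^ p) ^ k / ((2 : ℝ) ^ p) ^ M := by
  rw [Real.mul_rpow hC (by positivity), ← Real.rpow_mul zero_le_two,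
    ← Real.rpow_mul_natCast zero_le_two, ← Real.rpow_mul_natCast zero_le_two, inv_pow,
    mul_div_assoc, mul_assoc, ← div_eq_mul_inv, ← Real.rpow_natCast, ← Real.rpow_sub two_pos,
    ← Real.rpow_sub two_pos]
  congr 2
  field_simp
  ring

lemma rpow_IklSet_bound_mul_eq {α p : ℝ} (hp : 0 < p) {C t : ℝ} (hC : 0 ≤ C) (ht : 0 ≤ t)
    (M k l : ℕ) :
    (C * (2 : ℝ) ^ ((M : ℝ) * (1 / p - 1)) * (2 : ℝ) ^ (α * l + k) / t) ^ p * 2⁻¹ ^ (l + 1)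
      = C ^ p * (2 : ℝ) ^ ((M : ℝ) * (1 - p)) / t ^ p / 2
          * ((2 : ℝ) ^ (α * p - 1)) ^ l * ((2 : ℝ) ^ p) ^ k := by
  rw [Real.div_rpow (by positivity) ht, Real.mul_rpow (by positivity) (by positivity),
    Real.mul_rpow hC (by positivity), ← Real.rpow_mul zero_le_two, ← Real.rpow_mul zero_le_two,
    ← Real.rpow_mul_natCast zero_le_two, ← Real.rpow_mul_natCast zero_le_two, inv_pow, pow_succ,
    ← Real.rpow_natCast]
  have hl : (2 : ℝ) ^ ((α * p - 1) * l) = (2 : ℝ) ^ (α * p * l) / 2 ^ (l : ℝ) := by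
    rw [← Real.rpow_sub two_pos]; ring_nf
  have hlk : (2 : ℝ) ^ ((α * l + k) * p) = (2 : ℝ) ^ (α * p * l) * 2 ^ (p * k) := by
    rw [← Real.rpow_add two_pos]; ring_nf
  have hM : (2 : ℝ) ^ ((M : ℝ) * (1 / p - 1) * p) = (2 : ℝ) ^ ((M : ℝ) * (1 - p)) := by
    congr 1; field_simp
  rw [hl, hlk, hM]
  field_simp

lemma sum_rpow_IkMSet_bound_mul_le {p : ℝ} (hp : 0 < p) {C : ℝ} (hC : 0 ≤ C) (M : ℕ) :
    ∑ k ∈ range M, (C * (2 : ℝ) ^ ((M : ℝ) * (1 / p - 1) + k)) ^ p * 2⁻¹ ^ M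
      ≤ C ^ p / ((2 : ℝ) ^ p - 1) := by
  have hr : (1 : ℝ) < 2 ^ p := Real.one_lt_rpow one_lt_two hp
  simp_rw [rpow_IkMSet_bound_mul_eq hp hC, ← sum_div, ← mul_sum]
  calc (C ^ p * ∑ k ∈ range M, ((2 : ℝ) ^ p) ^ k) / ((2 : ℝ) ^ p) ^ M
      ≤ C ^ p * (((2 : ℝ) ^ p) ^ M / ((2 : ℝ) ^ p - 1)) / ((2 : ℝ) ^ p) ^ M := by
        gcongr
        exact geom_sum_le_of_one_lt hr M
    _ = C ^ p / ((2 : ℝ) ^ p - 1) := by field_simp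

noncomputable def decayConst (α p C : ℝ) : ℝ :=
  C ^ p / (2 * ((2 : ℝ) ^ p - 1) * (1 - (2 : ℝ) ^ ((1 + α) * p - 1)))

lemma decayConst_nonneg {α p C : ℝ} (hp : 0 < p) (hαp : (1 + α) * p < 1) (hC : 0 ≤ C) :
    0 ≤ decayConst α p C := by
  have hr : 0 < (2 : ℝ) ^ p - 1 := by linarith [Real.one_lt_rpow one_lt_two hp]
  have hρ : 0 < 1 - (2 : ℝ) ^ ((1 + α) * p - 1) := by
    linarith [Real.rpow_lt_one_of_one_lt_of_neg one_lt_two (by linarith : (1 + α) * p - 1 < 0)]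
  unfold decayConst
  positivity

lemma sum_rpow_IklSet_bound_mul_le {α p : ℝ} (hp : 0 < p) (hαp : (1 + α) * p < 1) {C t : ℝ}
    (hC : 0 ≤ C) (ht : 0 ≤ t) (M : ℕ) :
    ∑ l ∈ range M, ∑ k ∈ range l,
        (C * (2 : ℝ) ^ ((M : ℝ) * (1 / p - 1)) * (2 : ℝ) ^ (α * l + k) / t) ^ p * 2⁻¹ ^ (l + 1)
      ≤ decayConst α p C * (2 : ℝ) ^ ((M : ℝ) * (1 - p)) / t ^ p := by
  have hr : (1 : ℝ) < 2 ^ p := Real.one_lt_rpow one_lt_two hp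
  have hsr : (2 : ℝ) ^ (α * p - 1) * 2 ^ p = 2 ^ ((1 + α) * p - 1) := by
    rw [← Real.rpow_add two_pos]; ring_nf
  have hρ : (2 : ℝ) ^ ((1 + α) * p - 1) < 1 :=
    Real.rpow_lt_one_of_one_lt_of_neg one_lt_two (by linarith)
  simp_rw [rpow_IklSet_bound_mul_eq hp hC ht, mul_assoc _ (_ ^ _) (_ ^ _), ← mul_sum]
  calc C ^ p * (2 : ℝ) ^ ((M : ℝ) * (1 - p)) / t ^ p / 2
        * ∑ l ∈ range M, ((2 : ℝ) ^ (α * p - 1)) ^ l * ∑ k ∈ range l, ((2 : ℝ) ^ p) ^ k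
      ≤ C ^ p * (2 : ℝ) ^ ((M : ℝ) * (1 - p)) / t ^ p / 2
        * (1 / ((2 ^ p - 1) * (1 - 2 ^ (α * p - 1) * 2 ^ p))) := by
        gcongr
        exact sum_range_pow_mul_geom_sum_le hr (by positivity) (hsr ▸ hρ) M
    _ = _ := by
        rw [hsr, decayConst]
        field_simp

theorem integral_abs_rpow_le_of_bounds_on_pieces {μ : Measure DyadicGroup} (hμ : IsDyadicHaar μ)
    {f : DyadicGroup → ℝ} {α p : ℝ} (hp : 0 < p) (hαp : (1 + α) * p < 1)
    (hfi : Integrable (fun x => |f x| ^ p) μ) {C t : ℝ} (ht : 0 ≤ t) {M : ℕ}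
    (hIM : ∫ x in IM M, |f x| ^ p ∂μ ≤ C)
    (hIkl : ∀ k l : ℕ, k < l → l < M → ∀ x ∈ IklSet k l,
      |f x| ≤ C * (2 : ℝ) ^ ((M : ℝ) * (1 / p - 1)) * (2 : ℝ) ^ (α * l + k) / t)
    (hIkM : ∀ k : ℕ, k < M → ∀ x ∈ IkMSet M k,
      |f x| ≤ C * (2 : ℝ) ^ ((M : ℝ) * (1 / p - 1) + k)) :
    ∫ x, |f x| ^ p ∂μ ≤ C + C ^ p / ((2 : ℝ) ^ p - 1)
      + decayConst α p C * (2 : ℝ) ^ ((M : ℝ) * (1 - p)) / t ^ p := by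
  have := hμ.isProbabilityMeasure
  have hg : 0 ≤ fun x => |f x| ^ p := fun x => by positivity
  have hC : 0 ≤ C := (integral_nonneg hg).trans hIM
  calc ∫ x, |f x| ^ p ∂μ
      = ∫ x in IM M ∪ (⋃ l ∈ range M, ⋃ k ∈ range l, IklSet k l) ∪ ⋃ k ∈ range M, IkMSet M k,
          |f x| ^ p ∂μ := by
        rw [IM_union_iUnion_IklSet_union_iUnion_IkMSet, setIntegral_univ]
    _ ≤ ∫ x in IM M, |f x| ^ p ∂μ
        + ∑ l ∈ range M, ∑ k ∈ range l, ∫ x in IklSet k l, |f x| ^ p ∂μ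
        + ∑ k ∈ range M, ∫ x in IkMSet M k, |f x| ^ p ∂μ := by
        refine (setIntegral_union_le_add hg hfi _ _).trans (add_le_add
          ((setIntegral_union_le_add hg hfi _ _).trans (add_le_add le_rfl ?_))
          (setIntegral_biUnion_le_sum hg hfi _ _))
        exact (setIntegral_biUnion_le_sum hg hfi _ _).trans
          (sum_le_sum fun l _ => setIntegral_biUnion_le_sum hg hfi _ _)
    _ ≤ C + ∑ l ∈ range M, ∑ k ∈ range l,
          (C * (2 : ℝ) ^ ((M : ℝ) * (1 / p - 1)) * (2 : ℝ) ^ (α * l + k) / t) ^ p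
            * 2⁻¹ ^ (l + 1)
        + ∑ k ∈ range M, (C * (2 : ℝ) ^ ((M : ℝ) * (1 / p - 1) + k)) ^ p * 2⁻¹ ^ M := by
        gcongr with l hl k hk k hk
        · refine (setIntegral_abs_rpow_le hp.le
            (hIkl k l (mem_range.1 hk) (mem_range.1 hl))).trans ?_
          gcongr
          exact hμ.measureReal_le_of_subset_cylinder (IklSet_subset_cylinder (mem_range.1 hk))
        · refine (setIntegral_abs_rpow_le hp.le (hIkM k (mem_range.1 hk))).trans ?_
          gcongr
          exact hμ.measureReal_le_of_subset_cylinder (IkMSet_subset_cylinder M k)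
    _ ≤ _ := by
        linarith [sum_rpow_IklSet_bound_mul_le hp hαp hC ht M, sum_rpow_IkMSet_bound_mul_le hp hC M]

lemma div_rpow_le_of_le_add_div_rpow {α p K₁ B x m : ℝ} (hm : 0 < m)
    (h : x ≤ K₁ + B / (m ^ α) ^ p) :
    x / m ^ (2 - (1 + α) * p) ≤ K₁ * m ^ (-(2 - (1 + α) * p)) + B * m ^ (-(2 - p)) := by
  calc x / m ^ (2 - (1 + α) * p) ≤ (K₁ + B / (m ^ α) ^ p) / m ^ (2 - (1 + α) * p) := by gcongr
    _ = _ := by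
        rw [← Real.rpow_mul hm.le, add_div, div_div, ← Real.rpow_add hm,
          show α * p + (2 - (1 + α) * p) = 2 - p by ring, div_eq_mul_inv, div_eq_mul_inv,
          ← Real.rpow_neg hm.le, ← Real.rpow_neg hm.le]

open scoped Classical in
theorem strong_sum_bound_of_pointwise_general (α p : ℝ) (hα0 : 0 < α)
    (hp0 : 0 < p) (hp1 : p < 1 / (1 + α))
    (μ : Measure DyadicGroup) (hμ : IsDyadicHaar μ) (C : ℝ) :
    ∃ c : ℝ, ∀ (M : ℕ) (a : DyadicGroup → ℝ),
      (∀ m : ℕ, 2 ^ M < m → ∫ x in IM M, |cesaroMean μ α m a x| ^ p ∂μ ≤ C) →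
      (∀ k l : ℕ, k < l → l < M → ∀ x ∈ IklSet k l, ∀ m : ℕ, 2 ^ M < m →
        |cesaroMean μ α m a x| ≤
          C * (2 : ℝ) ^ ((M : ℝ) * (1 / p - 1)) * (2 : ℝ) ^ (α * l + k) / (m : ℝ) ^ α) →
      (∀ k : ℕ, k < M → ∀ x ∈ IkMSet M k, ∀ m : ℕ, 2 ^ M < m →
        |cesaroMean μ α m a x| ≤ C * (2 : ℝ) ^ ((M : ℝ) * (1 / p - 1) + k)) →
      (∑' m : ℕ, if 2 ^ M < m then
          (∫ x, |cesaroMean μ α m a x| ^ p ∂μ) / (m : ℝ) ^ (2 - (1 + α) * p) else 0) ≤ c := by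
  have hαp : (1 + α) * p < 1 := by rwa [lt_div_iff₀ (by linarith), mul_comm] at hp1
  have := hμ.isProbabilityMeasure
  refine ⟨(C + C ^ p / ((2 : ℝ) ^ p - 1)) / (2 - (1 + α) * p - 1)
    + decayConst α p C / (2 - p - 1), fun M a hIM hIkl hIkM => ?_⟩
  have hC : 0 ≤ C := (integral_nonneg fun x => by positivity).trans (hIM _ (Nat.lt_succ_self _))
  have hr : 0 < (2 : ℝ) ^ p - 1 := by linarith [Real.one_lt_rpow one_lt_two hp0]
  have h2M : (2 : ℝ) ^ ((M : ℝ) * (1 - p)) = ((2 ^ M : ℕ) : ℝ) ^ (2 - p - 1) := by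
    rw [Nat.cast_pow, Nat.cast_ofNat, ← Real.rpow_natCast, ← Real.rpow_mul zero_le_two]
    ring_nf
  refine tsum_ite_lt_le_of_le_rpow (by positivity) (by linarith) (by nlinarith) (by positivity)
    (decayConst_nonneg hp0 hαp hC) _ fun m hm => ?_
  have hm0 : (0 : ℝ) < m := by exact_mod_cast (Nat.zero_le _).trans_lt hm
  refine div_rpow_le_of_le_add_div_rpow hm0 ?_
  rw [← h2M]
  exact integral_abs_rpow_le_of_bounds_on_pieces hμ hp0 hαp
    (integrable_abs_cesaroMean_rpow μ μ α m a hp0.le) (by positivity) (hIM m hm)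
    (fun k l hkl hlM x hx => hIkl k l hkl hlM x hx m hm) (fun k hk x hx => hIkM k hk x hx m hm)

open scoped Classical in
theorem strong_sum_bound_of_pointwise (α p : ℝ) (hα0 : 0 < α) (hα1 : α < 1)
    (hp0 : 0 < p) (hp1 : p < 1 / (1 + α))
    (μ : Measure DyadicGroup) (hμ : IsDyadicHaar μ) (C : ℝ) :
    ∃ c : ℝ, ∀ (M : ℕ) (a : DyadicGroup → ℝ),
      (∀ m : ℕ, 2 ^ M < m → ∫ x in IM M, |cesaroMean μ α m a x| ^ p ∂μ ≤ C) →
      (∀ k l : ℕ, k < l → l < M → ∀ x ∈ IklSet k l, ∀ m : ℕ, 2 ^ M < m →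
        |cesaroMean μ α m a x| ≤
          C * (2 : ℝ) ^ ((M : ℝ) * (1 / p - 1)) * (2 : ℝ) ^ (α * l + k) / (m : ℝ) ^ α) →
      (∀ k : ℕ, k < M → ∀ x ∈ IkMSet M k, ∀ m : ℕ, 2 ^ M < m →
        |cesaroMean μ α m a x| ≤ C * (2 : ℝ) ^ ((M : ℝ) * (1 / p - 1) + k)) →
      (∑' m : ℕ, if 2 ^ M < m then
          (∫ x, |cesaroMean μ α m a x| ^ p ∂μ) / (m : ℝ) ^ (2 - (1 + α) * p) else 0) ≤ c :=
  strong_sum_bound_of_pointwise_general α p hα0 hp0 hp1 μ hμ C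
end
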